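/- arXiv:0806.2296 — 5 statements merged into one kernel-verified Lean document; each statement's English description precedes it below -/
import Mathlib

section
/- For each real E ≤ E₀ there exists a unique real J ≤ 0 such that (1/2)∫_{ρ₋}^{ρ₊} dr/(E·χ(r) − J) = 1 (in particular E·χ(r) − J > 0 for all r ∈ [ρ₋,ρ₊]). -/
/-!
Below `m = min (E χ)` on `[ρ₋, ρ₊]`, the map `J ↦ ∫ (E χ - J)⁻¹` is continuous, strictly
increasing and tends to `0` at `-∞`, so it takes the value `2` exactly once on `J < m` as soon
as it reaches `2` at some `J ≤ 0` below `m`. For `E > 0` this happens at `J = 0`, where the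
integral is `(φ₊ - φ₋) / E = 2 E₀ / E ≥ 2`. For `E ≤ 0` we have `m ≤ 0`, and since `E χ` is
Lipschitz, `E χ - m ≤ c |r - r₀|` around a minimiser `r₀`, so the integral grows like
`c⁻¹ log (1 / (m - J))` as `J ↑ m`. No `J ≥ m` is a solution: then `E χ - J` is negative
throughout or vanishes at some `β` of the interval, and `E χ(r) - E χ(β) = E (r - β) (1 - r - β)`
has a non-integrable reciprocal, so the integral is at most `0`.
-/

open Real MeasureTheory Set Filter Topology Function

noncomputable section

def chi (a : ℝ) : ℝ := a * (1 - a)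

section InvSub

variable {g : ℝ → ℝ} {a b m : ℝ}

lemma continuousOn_inv_sub (hg : ContinuousOn g (Icc a b)) (hm : ∀ r ∈ Icc a b, m ≤ g r)
    {J : ℝ} (hJ : J < m) : ContinuousOn (fun r => (g r - J)⁻¹) (Icc a b) :=
  (hg.sub continuousOn_const).inv₀ fun r hr => sub_ne_zero.2 (hJ.trans_le (hm r hr)).ne'

lemma intervalIntegrable_inv_sub (hab : a ≤ b) (hg : ContinuousOn g (Icc a b))
    (hm : ∀ r ∈ Icc a b, m ≤ g r) {J : ℝ} (hJ : J < m) :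
    IntervalIntegrable (fun r => (g r - J)⁻¹) volume a b :=
  (continuousOn_inv_sub hg hm hJ).intervalIntegrable_of_Icc hab

lemma strictMonoOn_integral_inv_sub (hab : a < b) (hg : ContinuousOn g (Icc a b))
    (hm : ∀ r ∈ Icc a b, m ≤ g r) :
    StrictMonoOn (fun J => ∫ r in a..b, (g r - J)⁻¹) (Iio m) := by
  intro J₁ hJ₁ J₂ hJ₂ h12
  refine intervalIntegral.integral_lt_integral_of_continuousOn_of_le_of_exists_lt hab
    (continuousOn_inv_sub hg hm hJ₁) (continuousOn_inv_sub hg hm hJ₂) (fun r hr => ?_)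
    ⟨a, left_mem_Icc.2 hab.le, ?_⟩
  · have := hm r (Ioc_subset_Icc_self hr)
    exact inv_anti₀ (by linarith [mem_Iio.1 hJ₂]) (by linarith)
  · have := hm a (left_mem_Icc.2 hab.le)
    exact inv_strictAnti₀ (by linarith [mem_Iio.1 hJ₂]) (by linarith)

lemma continuousOn_integral_inv_sub (hab : a ≤ b) (hg : ContinuousOn g (Icc a b))
    (hm : ∀ r ∈ Icc a b, m ≤ g r) :
    ContinuousOn (fun J => ∫ r in a..b, (g r - J)⁻¹) (Iio m) := by
  rw [continuousOn_iff_continuous_domRestrict]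
  -- composing with `projIcc` makes the integrand jointly continuous and changes nothing on [a, b]
  set p : ℝ → ℝ := fun r => projIcc a b hab r
  have hp : ∀ r, p r ∈ Icc a b := fun r => Subtype.mem _
  have hgp : Continuous (g ∘ p) := hg.comp_continuous continuous_projIcc.subtype_val hp
  have hcont : Continuous (uncurry fun (J : Iio m) r => (g (p r) - J)⁻¹) :=
    ((hgp.comp continuous_snd).sub (continuous_subtype_val.comp continuous_fst)).inv₀
      fun x => sub_ne_zero.2 (x.1.2.trans_le (hm _ (hp x.2))).ne'
  convert intervalIntegral.continuous_parametric_intervalIntegral_of_continuous'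
    (μ := volume) hcont a b using 2 with J
  refine intervalIntegral.integral_congr fun r hr => ?_
  rw [uIcc_of_le hab] at hr
  simp [p, projIcc_of_mem hab hr]

lemma integral_inv_sub_le (hab : a ≤ b) (hg : ContinuousOn g (Icc a b))
    (hm : ∀ r ∈ Icc a b, m ≤ g r) {J : ℝ} (hJ : J < m) :
    ∫ r in a..b, (g r - J)⁻¹ ≤ (b - a) / (m - J) := by
  calc ∫ r in a..b, (g r - J)⁻¹ ≤ ∫ _ in a..b, (m - J)⁻¹ :=
        intervalIntegral.integral_mono_on hab (intervalIntegrable_inv_sub hab hg hm hJ)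
          intervalIntegrable_const fun r hr => inv_anti₀ (by linarith) (by linarith [hm r hr])
    _ = (b - a) / (m - J) := by simp [div_eq_mul_inv]

lemma exists_integral_inv_sub_eq (hab : a ≤ b) (hg : ContinuousOn g (Icc a b))
    (hm : ∀ r ∈ Icc a b, m ≤ g r) {B y : ℝ} (hB : B < m) (hy : 0 < y)
    (hyB : y ≤ ∫ r in a..b, (g r - B)⁻¹) :
    ∃ J ≤ B, ∫ r in a..b, (g r - J)⁻¹ = y := by
  set A := min B (m - (b - a) / y)
  have hAB : A ≤ B := min_le_left _ _
  have hA : A < m := hAB.trans_lt hB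
  have hyA : ∫ r in a..b, (g r - A)⁻¹ ≤ y := by
    refine (integral_inv_sub_le hab hg hm hA).trans ?_
    rw [div_le_iff₀ (by linarith)]
    have : A ≤ m - (b - a) / y := min_le_right _ _
    have : (b - a) / y * y = b - a := div_mul_cancel₀ _ hy.ne'
    nlinarith
  obtain ⟨J, hJ, hJy⟩ := intermediate_value_Icc hAB
    ((continuousOn_integral_inv_sub hab hg hm).mono fun J hJ => hJ.2.trans_lt hB) ⟨hyA, hyB⟩
  exact ⟨J, hJ.2, hJy⟩

lemma exists_eq_of_integral_inv_sub_pos (hg : ContinuousOn g (Icc a b)) {r₀ J : ℝ}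
    (hr₀ : r₀ ∈ Icc a b) (hJ : g r₀ ≤ J) (hpos : 0 < ∫ r in a..b, (g r - J)⁻¹) :
    ∃ β ∈ Icc a b, g β = J := by
  by_contra! hne
  have hlt : ∀ r ∈ Icc a b, g r < J := fun r hr => by
    by_contra! hle
    obtain ⟨β, hβ, hβJ⟩ := isPreconnected_Icc.intermediate_value hr₀ hr hg ⟨hJ, hle⟩
    exact hne β hβ hβJ
  have hab : a ≤ b := (mem_Icc.1 hr₀).1.trans (mem_Icc.1 hr₀).2
  have : 0 ≤ ∫ r in a..b, -(g r - J)⁻¹ := intervalIntegral.integral_nonneg hab fun r hr =>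
    neg_nonneg.2 (inv_nonpos.2 (sub_nonpos.2 (hlt r hr).le))
  rw [intervalIntegral.integral_neg] at this
  linarith

lemma integral_inv_mul_add {c d s t : ℝ} (hc : c ≠ 0) (hs : 0 < c * s + d)
    (ht : 0 < c * t + d) :
    ∫ r in s..t, (c * r + d)⁻¹ = c⁻¹ * log ((c * t + d) / (c * s + d)) := by
  rw [intervalIntegral.integral_comp_mul_add (fun x => x⁻¹) hc, integral_inv_of_pos hs ht,
    smul_eq_mul]

lemma log_div_le_integral_inv_add_mul_abs_sub {A c r₀ : ℝ} (hA : 0 < A) (hc : 0 < c)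
    (hr₀ : r₀ ∈ Icc a b) :
    c⁻¹ * log ((A + c * (b - a)) / A) ≤ ∫ r in a..b, (A + c * |r - r₀|)⁻¹ := by
  obtain ⟨ha, hb⟩ := hr₀
  have hint : ∀ s t, IntervalIntegrable (fun r => (A + c * |r - r₀|)⁻¹) volume s t :=
    fun s t => (Continuous.inv₀ (by fun_prop) fun r => by positivity).intervalIntegrable s t
  have hleft : ∫ r in a..r₀, (A + c * |r - r₀|)⁻¹ = c⁻¹ * log ((A + c * (r₀ - a)) / A) := by
    have hcongr : EqOn (fun r => (A + c * |r - r₀|)⁻¹) (fun r => (-c * r + (A + c * r₀))⁻¹)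
        (uIcc a r₀) := fun r hr => by
      rw [uIcc_of_le ha] at hr
      simp only [abs_of_nonpos (sub_nonpos.2 hr.2)]; ring_nf
    rw [intervalIntegral.integral_congr hcongr,
      integral_inv_mul_add (neg_ne_zero.2 hc.ne') (by nlinarith) (by linarith), inv_neg,
      neg_mul, ← mul_neg, ← log_inv, inv_div]
    congr 2; ring
  have hright : ∫ r in r₀..b, (A + c * |r - r₀|)⁻¹ = c⁻¹ * log ((A + c * (b - r₀)) / A) := by
    have hcongr : EqOn (fun r => (A + c * |r - r₀|)⁻¹) (fun r => (c * r + (A - c * r₀))⁻¹)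
        (uIcc r₀ b) := fun r hr => by
      rw [uIcc_of_le hb] at hr
      simp only [abs_of_nonneg (sub_nonneg.2 hr.1)]; ring_nf
    rw [intervalIntegral.integral_congr hcongr,
      integral_inv_mul_add hc.ne' (by linarith) (by nlinarith)]
    congr 2; ring
  rw [← intervalIntegral.integral_add_adjacent_intervals (hint a r₀) (hint r₀ b), hleft, hright,
    ← mul_add, ← log_mul (by positivity) (by positivity)]
  gcongr
  · exact div_pos (by nlinarith) hA
  · rw [div_mul_div_comm, le_div_iff₀ (by positivity), div_mul_eq_mul_div, div_le_iff₀ hA]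
    nlinarith [mul_nonneg (mul_nonneg hc.le (sub_nonneg.2 ha))
      (mul_nonneg hc.le (sub_nonneg.2 hb))]

lemma exists_lt_le_integral_inv_sub (hab : a < b) (hg : ContinuousOn g (Icc a b)) {r₀ c : ℝ}
    (hr₀ : r₀ ∈ Icc a b) (hmin : ∀ r ∈ Icc a b, g r₀ ≤ g r) (hc : 0 ≤ c)
    (hlip : ∀ r ∈ Icc a b, g r ≤ g r₀ + c * |r - r₀|) (y : ℝ) :
    ∃ J < g r₀, y ≤ ∫ r in a..b, (g r - J)⁻¹ := by
  set c' := c + 1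
  have hc' : 0 < c' := by positivity
  set A := c' * (b - a) / exp (c' * y)
  have hA : 0 < A := div_pos (mul_pos hc' (sub_pos.2 hab)) (exp_pos _)
  refine ⟨g r₀ - A, by linarith, ?_⟩
  calc y = c'⁻¹ * log (c' * (b - a) / A) := by
        rw [div_div_cancel₀ (mul_pos hc' (sub_pos.2 hab)).ne', log_exp,
          inv_mul_cancel_left₀ hc'.ne']
    _ ≤ c'⁻¹ * log ((A + c' * (b - a)) / A) := by
        gcongr
        linarith
    _ ≤ ∫ r in a..b, (A + c' * |r - r₀|)⁻¹ := log_div_le_integral_inv_add_mul_abs_sub hA hc' hr₀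
    _ ≤ ∫ r in a..b, (g r - (g r₀ - A))⁻¹ := by
        refine intervalIntegral.integral_mono_on hab.le
          ((Continuous.inv₀ (by fun_prop) fun r => by positivity).intervalIntegrable a b)
          (intervalIntegrable_inv_sub hab.le hg hmin (sub_lt_self _ hA)) fun r hr => ?_
        have := hlip r hr
        have := hmin r hr
        exact inv_anti₀ (by linarith) (by nlinarith [abs_nonneg (r - r₀)])

end InvSub

lemma continuous_chi : Continuous chi := by
  unfold chi; fun_prop

lemma chi_pos {r : ℝ} (h0 : 0 < r) (h1 : r < 1) : 0 < chi r :=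
  mul_pos h0 (sub_pos.2 h1)

lemma mul_chi_sub_mul_chi (E r s : ℝ) :
    E * chi r - E * chi s = (r - s) * (-E * r + E * (1 - s)) := by
  unfold chi; ring

lemma mul_chi_le_add_abs (E : ℝ) {r s : ℝ} (hr : r ∈ Icc (0 : ℝ) 1) (hs : s ∈ Icc (0 : ℝ) 1) :
    E * chi r ≤ E * chi s + |E| * |r - s| := by
  have h : E * chi r - E * chi s = E * (1 - r - s) * (r - s) := by unfold chi; ring
  have hbound : |E * (1 - r - s) * (r - s)| ≤ |E| * |r - s| := by
    rw [abs_mul, abs_mul, mul_assoc]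
    gcongr
    exact mul_le_of_le_one_left (abs_nonneg _)
      (abs_le.2 ⟨by linarith [hr.2, hs.2], by linarith [hr.1, hs.1]⟩)
  linarith [le_abs_self (E * (1 - r - s) * (r - s))]

lemma integral_inv_chi {a b : ℝ} (ha : 0 < a) (hab : a ≤ b) (hb : b < 1) :
    ∫ r in a..b, (chi r)⁻¹ = log (b / (1 - b)) - log (a / (1 - a)) := by
  have hmem : ∀ r ∈ uIcc a b, 0 < r ∧ r < 1 := fun r hr => by
    rw [uIcc_of_le hab] at hr
    exact ⟨ha.trans_le hr.1, hr.2.trans_lt hb⟩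
  have hderiv : ∀ r ∈ uIcc a b, HasDerivAt (fun r => log r - log (1 - r)) (chi r)⁻¹ r := by
    intro r hr
    obtain ⟨hr0, hr1⟩ := hmem r hr
    refine ((hasDerivAt_log hr0.ne').sub
      (((hasDerivAt_id' r).const_sub 1).log (sub_pos.2 hr1).ne')).congr_deriv ?_
    unfold chi
    field_simp [(sub_pos.2 hr1).ne']
    ring
  have hint : IntervalIntegrable (fun r => (chi r)⁻¹) volume a b :=
    (continuous_chi.continuousOn.inv₀ fun r hr =>
      (chi_pos (hmem r hr).1 (hmem r hr).2).ne').intervalIntegrable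
  rw [intervalIntegral.integral_eq_sub_of_hasDerivAt hderiv hint,
    log_div ha.ne' (sub_pos.2 (hab.trans_lt hb)).ne',
    log_div (ha.trans_le hab).ne' (sub_pos.2 hb).ne']

lemma not_intervalIntegrable_inv_sub_mul {a b β c d : ℝ} (hab : a ≠ b) (hβ : β ∈ uIcc a b)
    (hc : c ≠ 0) : ¬ IntervalIntegrable (fun r => ((r - β) * (c * r + d))⁻¹) volume a b := by
  intro h
  have hmul := h.continuousOn_mul (g := fun r => c * r + d) (by fun_prop)
  have hsub : IntervalIntegrable (fun r => (r - β)⁻¹) volume a b := by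
    refine hmul.congr_ae (ae_restrict_of_ae ?_)
    filter_upwards [Measure.ae_ne volume (-d / c)] with r hr
    have : c * r + d ≠ 0 := fun h => hr (by field_simp; linarith)
    simp only [mul_inv]
    field_simp
  exact (intervalIntegrable_sub_inv_iff.1 hsub).elim hab (· hβ)

lemma integral_inv_mul_chi_sub_mul_chi (E : ℝ) {a b β : ℝ} (hβ : β ∈ uIcc a b) :
    ∫ r in a..b, (E * chi r - E * chi β)⁻¹ = 0 := by
  rcases eq_or_ne E 0 with rfl | hE
  · simp
  rcases eq_or_ne a b with rfl | hab
  · simp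
  simp only [mul_chi_sub_mul_chi]
  exact intervalIntegral.integral_undef
    (not_intervalIntegrable_inv_sub_mul hab hβ (neg_ne_zero.2 hE))

lemma integral_inv_mul_chi_sub_nonpos (E : ℝ) {a b r₀ J : ℝ} (hr₀ : r₀ ∈ Icc a b)
    (hJ : E * chi r₀ ≤ J) : ∫ r in a..b, (E * chi r - J)⁻¹ ≤ 0 := by
  by_contra! hpos
  obtain ⟨β, hβ, rfl⟩ := exists_eq_of_integral_inv_sub_pos (g := fun r => E * chi r)
    (continuous_chi.const_mul E).continuousOn hr₀ hJ hpos
  rw [integral_inv_mul_chi_sub_mul_chi E (Icc_subset_uIcc hβ)] at hpos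
  exact hpos.false

/-- For each `E ≤ E₀` there exists a unique `J ≤ 0` such that
`(1/2)∫_{ρ₋}^{ρ₊} dr/(E χ(r) − J) = 1`; in particular `E χ(r) − J > 0` on `[ρ₋,ρ₊]`. -/
theorem stmt0 (ρm ρp φm φp E0 : ℝ)
    (h0 : 0 < ρm) (h1 : ρm < ρp) (h2 : ρp < 1)
    (hφm : φm = Real.log (ρm / (1 - ρm))) (hφp : φp = Real.log (ρp / (1 - ρp)))
    (hE0 : E0 = (φp - φm) / 2) (E : ℝ) (hE : E ≤ E0) :
    ∃ J : ℝ, (J ≤ 0 ∧ (1/2) * (∫ r in ρm..ρp, (E * chi r - J)⁻¹) = 1) ∧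
      (∀ r ∈ Set.Icc ρm ρp, 0 < E * chi r - J) ∧
      (∀ J' : ℝ, J' ≤ 0 → (1/2) * (∫ r in ρm..ρp, (E * chi r - J')⁻¹) = 1 → J' = J) := by
  have hunit : Icc ρm ρp ⊆ Icc 0 1 := Icc_subset_Icc h0.le h2.le
  have hg : ContinuousOn (fun r => E * chi r) (Icc ρm ρp) :=
    (continuous_chi.const_mul E).continuousOn
  obtain ⟨r₀, hr₀, hmin⟩ := isCompact_Icc.exists_isMinOn (nonempty_Icc.2 h1.le) hg
  have hm : ∀ r ∈ Icc ρm ρp, E * chi r₀ ≤ E * chi r := fun r hr => hmin hr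
  have hχr₀ : 0 < chi r₀ := chi_pos (h0.trans_le hr₀.1) (hr₀.2.trans_lt h2)
  obtain ⟨B, hBm, hB0, hB⟩ :
      ∃ B < E * chi r₀, B ≤ 0 ∧ 2 ≤ ∫ r in ρm..ρp, (E * chi r - B)⁻¹ := by
    rcases le_or_gt E 0 with hEnp | hEpos
    · obtain ⟨B, hBm, hB⟩ := exists_lt_le_integral_inv_sub (g := fun r => E * chi r) h1 hg hr₀
        hm (abs_nonneg E) (fun r hr => mul_chi_le_add_abs E (hunit hr) (hunit hr₀)) 2
      exact ⟨B, hBm, hBm.le.trans (mul_nonpos_of_nonpos_of_nonneg hEnp hχr₀.le), hB⟩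
    · refine ⟨0, mul_pos hEpos hχr₀, le_rfl, ?_⟩
      simp only [sub_zero, mul_inv, intervalIntegral.integral_const_mul,
        integral_inv_chi h0 h1.le h2, ← hφm, ← hφp]
      rw [le_inv_mul_iff₀ hEpos]
      linarith
  obtain ⟨J, hJB, hJ⟩ := exists_integral_inv_sub_eq (g := fun r => E * chi r) h1.le hg hm hBm
    two_pos hB
  have hJm : J < E * chi r₀ := hJB.trans_lt hBm
  refine ⟨J, ⟨hJB.trans hB0, by rw [hJ]; norm_num⟩, fun r hr => by linarith [hm r hr],
    fun J' _ hJ' => ?_⟩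
  have hJ'm : J' < E * chi r₀ := by
    by_contra! hle
    linarith [integral_inv_mul_chi_sub_nonpos E hr₀ hle]
  exact (strictMonoOn_integral_inv_sub (g := fun r => E * chi r) h1 hg hm).injOn hJ'm hJm
    (by linarith)
end
end

section
/- For each E ≤ E₀ the initial value problem ρ̄' = E·χ(ρ̄) − J_E with ρ̄(−1) = ρ₋ has a unique solution ρ̄_E on the whole interval [−1,1]; this solution is strictly increasing, takes values in [ρ₋,ρ₊], and satisfies ρ̄_E(1) = ρ₊. Moreover, if E < 0 then J_E/E > max_{r∈[ρ₋,ρ₊]} χ(r). -/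
/-! Separation of variables. Since `1/(Eχ - J)` has a finite nonzero integral over `[ρ₋, ρ₊]`,
the field `Eχ - J` is positive there: a zero would make `1/(Eχ - J)` non-integrable (the field is
Lipschitz and vanishes only on a null set), and without a zero it has constant sign. The solution
is then the inverse of the travel time `y ↦ ∫_{ρ₋}^y dr/(Eχ(r) - J)`, shifted by one, which
reaches `ρ₊` at time `2`; uniqueness is the Lipschitz uniqueness theorem for ODEs. -/

open Real MeasureTheory Set Filter Topology Function

noncomputable section

open scoped NNReal

theorem not_intervalIntegrable_inv_of_lipschitzOnWith {f : ℝ → ℝ} {K : ℝ≥0} {a b c : ℝ}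
    (hab : a ≠ b) (hf : LipschitzOnWith K f (uIcc a b)) (hc : c ∈ uIcc a b) (hfc : f c = 0)
    (hzero : ∀ᵐ x, f x ≠ 0) : ¬ IntervalIntegrable (fun x => (f x)⁻¹) volume a b := by
  intro hint
  have hsub : IntervalIntegrable (fun x => (x - c)⁻¹) volume a b := by
    refine (hint.const_mul K).mono_fun (by fun_prop) ?_
    filter_upwards [ae_restrict_of_ae hzero, ae_restrict_mem measurableSet_uIoc] with x hx hxI
    have hlip : |f x| ≤ K * |x - c| := by
      simpa [hfc, Real.dist_eq] using hf.dist_le_mul x (uIoc_subset_uIcc hxI) c hc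
    have hfx : 0 < |f x| := abs_pos.2 hx
    have hxc : 0 < |x - c| := pos_of_mul_pos_right (hfx.trans_le hlip) K.2
    simp only [norm_inv, norm_mul, Real.norm_eq_abs, NNReal.abs_eq]
    rw [le_mul_inv_iff₀ hfx, inv_mul_le_iff₀ hxc]
    linarith
  rw [intervalIntegrable_sub_inv_iff] at hsub
  exact hsub.elim hab fun h => h hc

theorem pos_of_integral_inv_pos {f : ℝ → ℝ} {a b : ℝ} (hab : a < b) (hf : LocallyLipschitz f)
    (hzero : ∀ᵐ x, f x ≠ 0) (hint : 0 < ∫ x in a..b, (f x)⁻¹) : ∀ x ∈ Icc a b, 0 < f x := by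
  by_contra! ⟨x₀, hx₀, hfx₀⟩
  by_cases hall : ∀ x ∈ Icc a b, f x ≤ 0
  · have : 0 ≤ ∫ x in a..b, -(f x)⁻¹ :=
      intervalIntegral.integral_nonneg hab.le fun x hx => neg_nonneg.2 (inv_nonpos.2 (hall x hx))
    rw [intervalIntegral.integral_neg] at this
    linarith
  · push Not at hall
    obtain ⟨x₁, hx₁, hfx₁⟩ := hall
    have hsub : uIcc x₀ x₁ ⊆ uIcc a b := by
      rw [uIcc_of_le hab.le]; exact uIcc_subset_Icc hx₀ hx₁
    obtain ⟨c, hc, hfc⟩ := intermediate_value_uIcc hf.continuous.continuousOn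
      (mem_uIcc.2 (Or.inl ⟨hfx₀, hfx₁.le⟩) : (0 : ℝ) ∈ uIcc (f x₀) (f x₁))
    obtain ⟨K, hK⟩ := hf.locallyLipschitzOn.exists_lipschitzOnWith_of_compact isCompact_uIcc
    -- the integral of a non-integrable function has the junk value `0`
    rw [intervalIntegral.integral_undef
      (not_intervalIntegrable_inv_of_lipschitzOnWith hab.ne hK (hsub hc) hfc hzero)] at hint
    exact hint.false

theorem Polynomial.ae_eval_ne_zero {p : Polynomial ℝ} (hp : p ≠ 0) : ∀ᵐ x, p.eval x ≠ 0 := by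
  rw [ae_iff]
  simpa using (Polynomial.finite_setOfPred_isRoot hp).measure_zero volume

theorem ae_mobilityField_ne_zero {E J : ℝ} (h : ∃ r, E * chi r - J ≠ 0) :
    ∀ᵐ r, E * chi r - J ≠ 0 := by
  open Polynomial in
  have heval (r : ℝ) : (C E * X * (1 - X) - C J).eval r = E * chi r - J := by
    simp [chi, mul_assoc]
  simp_rw [← heval] at h ⊢
  obtain ⟨r, hr⟩ := h
  exact Polynomial.ae_eval_ne_zero fun hp => hr (by rw [hp, eval_zero])

theorem mobilityField_pos {ρm ρp E J : ℝ} (h1 : ρm < ρp)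
    (hint : 0 < ∫ r in ρm..ρp, (E * chi r - J)⁻¹) : ∀ r ∈ Icc ρm ρp, 0 < E * chi r - J := by
  by_cases hzero : ∀ r, E * chi r - J = 0
  · simp [hzero] at hint
  push Not at hzero
  exact pos_of_integral_inv_pos h1 (ContDiff.locallyLipschitz (𝕂 := ℝ) (by unfold chi; fun_prop))
    (ae_mobilityField_ne_zero hzero) hint

theorem surjective_of_pos_le_deriv {f : ℝ → ℝ} {c : ℝ} (hf : Differentiable ℝ f) (hc : 0 < c)
    (hf' : ∀ x, c ≤ deriv f x) : Surjective f := by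
  have hgrowth := mul_sub_le_image_sub_of_le_deriv hf hf'
  refine hf.continuous.surjective ?_ ?_
  · refine tendsto_atTop_mono' atTop ?_
      (tendsto_atTop_add_const_right _ (f 0) (tendsto_id.const_mul_atTop hc))
    filter_upwards [eventually_ge_atTop 0] with x hx
    simp only [id]
    linarith [hgrowth hx]
  · refine tendsto_atBot_mono' atBot ?_
      (tendsto_atBot_add_const_right _ (f 0) (tendsto_id.const_mul_atBot hc))
    filter_upwards [eventually_le_atBot 0] with x hx
    simp only [id]
    linarith [hgrowth hx]

theorem exists_orderIso_integral_inv {G : ℝ → ℝ} {c : ℝ} (hG : Continuous G) (hc : 0 < c)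
    (hcG : ∀ x, c ≤ (G x)⁻¹) (x₀ : ℝ) :
    ∃ Φ : ℝ ≃o ℝ, (∀ y, Φ y = ∫ r in x₀..y, (G r)⁻¹) ∧
      ∀ t, HasDerivAt Φ.symm (G (Φ.symm t)) t := by
  have hGpos (x : ℝ) : 0 < G x := inv_pos.1 (hc.trans_le (hcG x))
  have hderiv (y : ℝ) : HasDerivAt (fun y => ∫ r in x₀..y, (G r)⁻¹) (G y)⁻¹ y :=
    ((hG.inv₀ fun x => (hGpos x).ne').integral_hasStrictDerivAt x₀ y).hasDerivAt
  have hmono : StrictMono fun y => ∫ r in x₀..y, (G r)⁻¹ :=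
    strictMono_of_deriv_pos fun y => (hderiv y).deriv ▸ inv_pos.2 (hGpos y)
  have hsurj : Surjective fun y => ∫ r in x₀..y, (G r)⁻¹ :=
    surjective_of_pos_le_deriv (fun y => (hderiv y).differentiableAt) hc
      fun y => (hderiv y).deriv ▸ hcG y
  refine ⟨hmono.orderIsoOfSurjective _ hsurj, fun y => rfl, fun t => ?_⟩
  set Φ := hmono.orderIsoOfSurjective _ hsurj
  simpa using (hderiv (Φ.symm t)).of_local_left_inverse Φ.symm.continuous.continuousAt
    (inv_ne_zero (hGpos _).ne') (Eventually.of_forall Φ.apply_symm_apply)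

theorem exists_strictMono_hasDerivAt_of_pos {g : ℝ → ℝ} {a b : ℝ} (hab : a ≤ b)
    (hg : ContinuousOn g (Icc a b)) (hpos : ∀ x ∈ Icc a b, 0 < g x) :
    ∃ ρ : ℝ → ℝ, StrictMono ρ ∧ ρ 0 = a ∧ ρ (∫ x in a..b, (g x)⁻¹) = b ∧
      ∀ t, ρ t ∈ Icc a b → HasDerivAt ρ (g (ρ t)) t := by
  have hproj (x : ℝ) (hx : x ∈ Icc a b) : (projIcc a b hab x : ℝ) = x := by
    rw [projIcc_of_mem hab hx]
  -- extending `g` constantly outside `[a, b]` keeps `1/g` bounded below by a positive constant,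
  -- so that the travel time is a bijection of `ℝ`
  obtain ⟨c, hc, hcg⟩ := isCompact_Icc.exists_forall_le'
    (hg.inv₀ fun x hx => (hpos x hx).ne') fun x hx => inv_pos.2 (hpos x hx)
  obtain ⟨Φ, hΦ, hΦsymm⟩ := exists_orderIso_integral_inv (G := fun x => g (projIcc a b hab x))
    (hg.comp_continuous (continuous_subtype_val.comp continuous_projIcc)
      fun x => (projIcc a b hab x).2)
    hc (fun x => hcg _ (projIcc a b hab x).2) a
  have hΦb : ∫ x in a..b, (g x)⁻¹ = Φ b := by
    rw [hΦ]
    refine intervalIntegral.integral_congr fun x hx => ?_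
    rw [hproj x (by rwa [uIcc_of_le hab] at hx)]
  refine ⟨Φ.symm, Φ.symm.strictMono, Φ.symm_apply_eq.2 (by simp [hΦ]), by simp [hΦb],
    fun t ht => ?_⟩
  simpa [hproj _ ht] using hΦsymm t

theorem eqOn_Icc_of_hasDerivWithinAt {E : Type*} [NormedAddCommGroup E] [NormedSpace ℝ E]
    {v : E → E} (hv : LocallyLipschitz v) {f g : ℝ → E} {a b : ℝ}
    (hf : ∀ t ∈ Icc a b, HasDerivWithinAt f (v (f t)) (Icc a b) t)
    (hg : ∀ t ∈ Icc a b, HasDerivWithinAt g (v (g t)) (Icc a b) t) (ha : f a = g a) :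
    EqOn f g (Icc a b) := by
  have hfc : ContinuousOn f (Icc a b) := fun t ht => (hf t ht).continuousWithinAt
  have hgc : ContinuousOn g (Icc a b) := fun t ht => (hg t ht).continuousWithinAt
  obtain ⟨K, hK⟩ := hv.locallyLipschitzOn.exists_lipschitzOnWith_of_compact
    ((isCompact_Icc.image_of_continuousOn hfc).union (isCompact_Icc.image_of_continuousOn hgc))
  have hIci {h : ℝ → E} (hh : ∀ t ∈ Icc a b, HasDerivWithinAt h (v (h t)) (Icc a b) t) :
      ∀ t ∈ Ico a b, HasDerivWithinAt h (v (h t)) (Ici t) t := fun t ht =>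
    (hh t (Ico_subset_Icc_self ht)).mono_of_mem_nhdsWithin (Icc_mem_nhdsGE_of_mem ht)
  exact ODE_solution_unique_of_mem_Icc_right (v := fun _ => v) (fun _ _ => hK)
    hfc (hIci hf) (fun t ht => Or.inl ⟨t, Ico_subset_Icc_self ht, rfl⟩)
    hgc (hIci hg) (fun t ht => Or.inr ⟨t, Ico_subset_Icc_self ht, rfl⟩) ha

theorem stmt1_general (ρm ρp : ℝ)
    (h1 : ρm < ρp)
    (E J : ℝ)
    (hJeq : (1/2) * (∫ r in ρm..ρp, (E * chi r - J)⁻¹) = 1) :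
    ∃ ρb : ℝ → ℝ,
      (ρb (-1) = ρm ∧
        ∀ u ∈ Set.Icc (-1:ℝ) 1,
          HasDerivWithinAt ρb (E * chi (ρb u) - J) (Set.Icc (-1:ℝ) 1) u) ∧
      (∀ σ : ℝ → ℝ, σ (-1) = ρm →
        (∀ u ∈ Set.Icc (-1:ℝ) 1,
          HasDerivWithinAt σ (E * chi (σ u) - J) (Set.Icc (-1:ℝ) 1) u) →
        Set.EqOn σ ρb (Set.Icc (-1:ℝ) 1)) ∧
      StrictMonoOn ρb (Set.Icc (-1:ℝ) 1) ∧
      (∀ u ∈ Set.Icc (-1:ℝ) 1, ρb u ∈ Set.Icc ρm ρp) ∧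
      ρb 1 = ρp ∧
      (E < 0 → ∀ r ∈ Set.Icc ρm ρp, chi r < J / E) := by
  have hfield : ContDiff ℝ 1 fun r => E * chi r - J := by unfold chi; fun_prop
  have htime : ∫ r in ρm..ρp, (E * chi r - J)⁻¹ = 2 := by linarith
  have hpos := mobilityField_pos h1 (htime ▸ two_pos)
  obtain ⟨ρ, hmono, hρm, hρp, hρ'⟩ :=
    exists_strictMono_hasDerivAt_of_pos h1.le hfield.continuous.continuousOn hpos
  rw [htime] at hρp
  have hmaps (u : ℝ) (hu : u ∈ Icc (-1:ℝ) 1) : ρ (u + 1) ∈ Icc ρm ρp :=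
    ⟨hρm ▸ hmono.monotone (by linarith [hu.1]), hρp ▸ hmono.monotone (by linarith [hu.2])⟩
  have hsol (u : ℝ) (hu : u ∈ Icc (-1:ℝ) 1) :
      HasDerivWithinAt (fun u => ρ (u + 1)) (E * chi (ρ (u + 1)) - J) (Icc (-1) 1) u :=
    ((hρ' _ (hmaps u hu)).comp_add_const u 1).hasDerivWithinAt
  refine ⟨fun u => ρ (u + 1), ⟨by norm_num [hρm], hsol⟩,
    fun σ hσ hσ' => eqOn_Icc_of_hasDerivWithinAt hfield.locallyLipschitz hσ' hsol
      (by norm_num [hσ, hρm]),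
    fun u _ v _ huv => hmono (by linarith), hmaps, by norm_num [hρp], fun hE r hr => ?_⟩
  rw [lt_div_iff_of_neg hE, mul_comm]
  linarith [hpos r hr]

/-- The stationary profile: the IVP `ρ̄' = E χ(ρ̄) − J_E`, `ρ̄(−1) = ρ₋` has a unique
solution on `[−1,1]`; it is strictly increasing, takes values in `[ρ₋,ρ₊]`, and
`ρ̄(1) = ρ₊`.  Moreover if `E < 0` then `J_E/E > max_{[ρ₋,ρ₊]} χ`. -/
theorem stmt1 (ρm ρp φm φp E0 : ℝ)
    (h0 : 0 < ρm) (h1 : ρm < ρp) (h2 : ρp < 1)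
    (hφm : φm = Real.log (ρm / (1 - ρm))) (hφp : φp = Real.log (ρp / (1 - ρp)))
    (hE0 : E0 = (φp - φm) / 2) (E J : ℝ) (hE : E ≤ E0)
    (hJneg : J ≤ 0) (hJeq : (1/2) * (∫ r in ρm..ρp, (E * chi r - J)⁻¹) = 1) :
    ∃ ρb : ℝ → ℝ,
      (ρb (-1) = ρm ∧
        ∀ u ∈ Set.Icc (-1:ℝ) 1,
          HasDerivWithinAt ρb (E * chi (ρb u) - J) (Set.Icc (-1:ℝ) 1) u) ∧
      (∀ σ : ℝ → ℝ, σ (-1) = ρm →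
        (∀ u ∈ Set.Icc (-1:ℝ) 1,
          HasDerivWithinAt σ (E * chi (σ u) - J) (Set.Icc (-1:ℝ) 1) u) →
        Set.EqOn σ ρb (Set.Icc (-1:ℝ) 1)) ∧
      StrictMonoOn ρb (Set.Icc (-1:ℝ) 1) ∧
      (∀ u ∈ Set.Icc (-1:ℝ) 1, ρb u ∈ Set.Icc ρm ρp) ∧
      ρb 1 = ρp ∧
      (E < 0 → ∀ r ∈ Set.Icc ρm ρp, chi r < J / E) :=
  stmt1_general ρm ρp h1 E J hJeq
end
end

section
/- For each E < E₀ there exists a finite constant C, depending only on φ₋, φ₊ and E, such that 𝓖_E(ρ,φ) ≤ C for every ρ ∈ 𝓜 and every φ ∈ 𝓕_E. -/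
/-!
Apart from the constant `-A`, every term of the integrand of `𝓖_E` is bounded above
pointwise: the entropy `ρ log ρ + (1-ρ) log(1-ρ)` is nonpositive,
`(1-ρ)φ ≤ max(0,φ) ≤ log(1+e^φ)`, and the `φ'`-term is a secant slope of the convex function
`x log x` between `φ' - E` and `φ'`, hence at most `1 + log(φ' + max(0,-E)) ≤ φ' + max(0,-E)`.
The resulting bound is linear in `φ'`, and `∫ φ' = φ₊ - φ₋` by the fundamental theorem of
calculus.
-/

open Real MeasureTheory Set Filter Topology Function

noncomputable section

/-- The set `𝓜`: measurable density profiles on `[−1,1]` with values in `[0,1]`. -/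
def memM (ρ : ℝ → ℝ) : Prop :=
  Measurable ρ ∧ ∀ u ∈ Set.Icc (-1:ℝ) 1, ρ u ∈ Set.Icc (0:ℝ) 1

/-- `φ ∈ 𝓕_E`, with explicit derivative function `d`: `φ` is `C¹` on `[−1,1]` with
Lipschitz derivative `d`, `φ(−1) = φ₋`, `φ(1) = φ₊`, and `d > max 0 E` on `[−1,1]`. -/
def memF (φm φp E : ℝ) (φ d : ℝ → ℝ) : Prop :=
  (∀ u ∈ Set.Icc (-1:ℝ) 1, HasDerivWithinAt φ (d u) (Set.Icc (-1:ℝ) 1) u) ∧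
  (∃ L : NNReal, LipschitzOnWith L d (Set.Icc (-1:ℝ) 1)) ∧
  φ (-1) = φm ∧ φ 1 = φp ∧
  (∀ u ∈ Set.Icc (-1:ℝ) 1, max 0 E < d u)

/-- The functional `𝓖_E(ρ,φ)` (with `d = φ'`), including the `E = 0` case.
Recall the convention `0 log 0 = 0` (in Lean `Real.log 0 = 0`). -/
def GEint (E A : ℝ) (ρ φ d : ℝ → ℝ) : ℝ :=
  ∫ u in (-1:ℝ)..1,
    (ρ u * Real.log (ρ u) + (1 - ρ u) * Real.log (1 - ρ u)
      + (1 - ρ u) * φ u - Real.log (1 + Real.exp (φ u))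
      + (if E = 0 then Real.log (d u) + 1
         else E⁻¹ * (d u * Real.log (d u) - (d u - E) * Real.log (d u - E)))
      - A)

lemma mul_log_secant_le {a b : ℝ} (ha : 0 < a) (hab : a < b) :
    (b * log b - a * log a) / (b - a) ≤ 1 + log b := by
  have hb : 0 < b := ha.trans hab
  have h := mul_le_mul_of_nonneg_left (log_le_sub_one_of_pos (div_pos hb ha)) ha.le
  rw [log_div hb.ne' ha.ne', mul_sub_one, mul_div_cancel₀ b ha.ne'] at h
  rw [div_le_iff₀ (sub_pos.2 hab)]
  linarith

lemma mul_le_log_one_add_exp {t : ℝ} (ht : t ∈ Icc (0 : ℝ) 1) (x : ℝ) :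
    t * x ≤ log (1 + exp x) := by
  have h0 : 0 ≤ log (1 + exp x) := log_nonneg (by linarith [exp_pos x])
  have h1 : x ≤ log (1 + exp x) :=
    (log_exp x).symm.trans_le (log_le_log (exp_pos x) (by linarith))
  rcases le_total x 0 with hx | hx <;> nlinarith [ht.1, ht.2]

lemma mul_log_add_mul_log_one_sub (r : ℝ) :
    r * log r + (1 - r) * log (1 - r) = -binEntropy r := by
  simp only [binEntropy, log_inv]
  ring

def slopeTerm (E D : ℝ) : ℝ :=
  if E = 0 then log D + 1 else E⁻¹ * (D * log D - (D - E) * log (D - E))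

lemma slopeTerm_le {E D : ℝ} (hD : max 0 E < D) :
    slopeTerm E D ≤ 1 + log (D + max 0 (-E)) := by
  have hD0 : 0 < D := (le_max_left 0 E).trans_lt hD
  rcases lt_trichotomy E 0 with hE | rfl | hE
  · have h : slopeTerm E D = ((D - E) * log (D - E) - D * log D) / (D - E - D) := by
      rw [slopeTerm, if_neg hE.ne]
      field_simp
      ring
    rw [h, max_eq_right (by linarith), ← sub_eq_add_neg]
    exact mul_log_secant_le hD0 (by linarith)
  · simp only [slopeTerm, if_true, neg_zero, max_self, add_zero]
    linarith
  · have h : slopeTerm E D = (D * log D - (D - E) * log (D - E)) / (D - (D - E)) := by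
      rw [slopeTerm, if_neg hE.ne', sub_sub_cancel, inv_mul_eq_div]
    rw [h, max_eq_left (by linarith), add_zero]
    exact mul_log_secant_le (by linarith [le_max_right 0 E]) (by linarith)

lemma continuousOn_slopeTerm (E : ℝ) : ContinuousOn (slopeTerm E) (Ioi (max 0 E)) := by
  have hpos : ∀ D ∈ Ioi (max 0 E), 0 < D := fun D hD => (le_max_left 0 E).trans_lt hD
  have hsub : ∀ D ∈ Ioi (max 0 E), D - E ≠ 0 := fun D hD =>
    sub_ne_zero.2 ((le_max_right 0 E).trans_lt hD).ne'
  unfold slopeTerm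
  split_ifs
  · exact (continuousOn_log.mono fun D hD => (hpos D hD).ne').add continuousOn_const
  · refine continuousOn_const.mul ((continuousOn_id.mul ?_).sub
      ((continuousOn_id.sub continuousOn_const).mul ?_))
    · exact continuousOn_log.mono fun D hD => (hpos D hD).ne'
    · exact (continuousOn_id.sub continuousOn_const).log hsub

def GEintegrand (E A r p D : ℝ) : ℝ :=
  r * log r + (1 - r) * log (1 - r) + (1 - r) * p - log (1 + exp p) + slopeTerm E D - A

lemma GEint_eq_integral_GEintegrand (E A : ℝ) (ρ φ d : ℝ → ℝ) :
    GEint E A ρ φ d = ∫ u in (-1 : ℝ)..1, GEintegrand E A (ρ u) (φ u) (d u) :=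
  rfl

lemma GEintegrand_le {E A r p D : ℝ} (hr : r ∈ Icc (0 : ℝ) 1) (hD : max 0 E < D) :
    GEintegrand E A r p D ≤ D + (max 0 (-E) - A) := by
  have hentropy := mul_log_add_mul_log_one_sub r ▸ neg_nonpos.2 (binEntropy_nonneg hr.1 hr.2)
  have hlin := mul_le_log_one_add_exp (t := 1 - r) ⟨by linarith [hr.2], by linarith [hr.1]⟩ p
  have hslope := slopeTerm_le hD
  have hlog := log_le_sub_one_of_pos
    (show 0 < D + max 0 (-E) by linarith [le_max_left 0 E, le_max_left 0 (-E)])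
  unfold GEintegrand
  linarith

namespace memF

variable {φm φp E : ℝ} {φ d : ℝ → ℝ}

lemma continuousOn (hφ : memF φm φp E φ d) : ContinuousOn φ (Icc (-1) 1) :=
  fun u hu => (hφ.1 u hu).continuousWithinAt

lemma continuousOn_deriv (hφ : memF φm φp E φ d) : ContinuousOn d (Icc (-1) 1) :=
  hφ.2.1.choose_spec.continuousOn

lemma integral_deriv (hφ : memF φm φp E φ d) : ∫ u in (-1 : ℝ)..1, d u = φp - φm := by
  rw [intervalIntegral.integral_eq_sub_of_hasDerivAt_of_le (by norm_num) hφ.continuousOn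
    (fun u hu => (hφ.1 u (Ioo_subset_Icc_self hu)).hasDerivAt (Icc_mem_nhds hu.1 hu.2))
    (hφ.continuousOn_deriv.intervalIntegrable_of_Icc (by norm_num)), hφ.2.2.1, hφ.2.2.2.1]

end memF

lemma intervalIntegrable_GEintegrand {φm φp E A : ℝ} {ρ φ d : ℝ → ℝ} (hρ : memM ρ)
    (hφ : memF φm φp E φ d) :
    IntervalIntegrable (fun u => GEintegrand E A (ρ u) (φ u) (d u)) volume (-1) 1 := by
  obtain ⟨hρm, hρ01⟩ := hρ
  rw [intervalIntegrable_iff_integrableOn_Icc_of_le (by norm_num)]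
  have hentropy : IntegrableOn (fun u => -binEntropy (ρ u)) (Icc (-1) 1) := by
    refine IntegrableOn.of_bound measure_Icc_lt_top
      (binEntropy_continuous.measurable.comp hρm).neg.aestronglyMeasurable (log 2)
      (ae_restrict_of_forall_mem measurableSet_Icc fun u hu => ?_)
    rw [norm_neg, norm_of_nonneg (binEntropy_nonneg (hρ01 u hu).1 (hρ01 u hu).2)]
    exact binEntropy_le_log_two
  have hlin : IntegrableOn (fun u => (1 - ρ u) * φ u) (Icc (-1) 1) := by
    refine hφ.continuousOn.integrableOn_Icc.bdd_mul (c := 1)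
      (measurable_const.sub hρm).aestronglyMeasurable
      (ae_restrict_of_forall_mem measurableSet_Icc fun u hu => ?_)
    rw [norm_eq_abs, abs_le]
    constructor <;> linarith [(hρ01 u hu).1, (hρ01 u hu).2]
  have hrest : ContinuousOn (fun u => -log (1 + exp (φ u)) + slopeTerm E (d u) - A)
      (Icc (-1) 1) := by
    refine (((continuousOn_const.add hφ.continuousOn.rexp).log fun u _ => ?_).neg.add
      ((continuousOn_slopeTerm E).comp hφ.continuousOn_deriv fun u hu => hφ.2.2.2.2 u hu)).sub
      continuousOn_const
    exact (add_pos one_pos (exp_pos _)).ne'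
  refine ((hentropy.add hlin).add hrest.integrableOn_Icc).congr_fun (fun u _ => ?_)
    measurableSet_Icc
  simp only [Pi.add_apply, GEintegrand, mul_log_add_mul_log_one_sub]
  ring

theorem stmt2_general (φm φp : ℝ) (E A : ℝ) :
    ∃ C : ℝ, ∀ ρ φ d : ℝ → ℝ, memM ρ → memF φm φp E φ d →
      GEint E A ρ φ d ≤ C := by
  refine ⟨φp - φm + 2 * (max 0 (-E) - A), fun ρ φ d hρ hφ => ?_⟩
  have hd : IntervalIntegrable d volume (-1) 1 :=
    hφ.continuousOn_deriv.intervalIntegrable_of_Icc (by norm_num)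
  calc GEint E A ρ φ d = ∫ u in (-1 : ℝ)..1, GEintegrand E A (ρ u) (φ u) (d u) :=
        GEint_eq_integral_GEintegrand E A ρ φ d
    _ ≤ ∫ u in (-1 : ℝ)..1, (d u + (max 0 (-E) - A)) :=
        intervalIntegral.integral_mono_on (by norm_num) (intervalIntegrable_GEintegrand hρ hφ)
          (hd.add intervalIntegrable_const) fun u hu =>
            GEintegrand_le (hρ.2 u hu) (hφ.2.2.2.2 u hu)
    _ = φp - φm + 2 * (max 0 (-E) - A) := by
        rw [intervalIntegral.integral_add hd intervalIntegrable_const, hφ.integral_deriv,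
          intervalIntegral.integral_const, smul_eq_mul]
        norm_num

/-- For `E < E₀` the functional `𝓖_E` is bounded above, uniformly over `ρ ∈ 𝓜`
and `φ ∈ 𝓕_E`. -/
theorem stmt2 (ρm ρp φm φp E0 : ℝ)
    (h0 : 0 < ρm) (h1 : ρm < ρp) (h2 : ρp < 1)
    (hφm : φm = Real.log (ρm / (1 - ρm))) (hφp : φp = Real.log (ρp / (1 - ρp)))
    (hE0 : E0 = (φp - φm) / 2) (E J A : ℝ) (hE : E < E0)
    (hJneg : J ≤ 0) (hJeq : (1/2) * (∫ r in ρm..ρp, (E * chi r - J)⁻¹) = 1)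
    (hA : A = if E = 0 then Real.log ((ρp - ρm) / 2) + 1
      else Real.log (-J) + (1/2) * ∫ r in ρm..ρp, (E * chi r)⁻¹ * Real.log (1 - E * chi r / J)) :
    ∃ C : ℝ, ∀ ρ φ d : ℝ → ℝ, memM ρ → memF φm φp E φ d →
      GEint E A ρ φ d ≤ C :=
  stmt2_general φm φp E A
end
end

section
/- Let E < E₀ and ρ ∈ 𝓜. If φ₁, φ₂ ∈ 𝓕_E both satisfy the Euler–Lagrange equation φ''/(φ'(φ'−E)) + 1/(1+e^φ) = ρ Lebesgue-a.e. on (−1,1), then φ₁ = φ₂. -/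
open Real MeasureTheory Set Filter Topology Function

noncomputable section

/-- The Euler–Lagrange equation `φ''/(φ'(φ'−E)) + 1/(1+e^φ) = ρ` holds Lebesgue-a.e.
on `(−1,1)`, where `d = φ'`. -/
def solvesEL (E : ℝ) (ρ φ d : ℝ → ℝ) : Prop :=
  ∀ᵐ u ∂(volume : Measure ℝ), u ∈ Set.Ioo (-1:ℝ) 1 →
    ∃ d2 : ℝ, HasDerivAt d d2 u ∧
      d2 / (d u * (d u - E)) + 1 / (1 + Real.exp (φ u)) = ρ u

lemma key_mono {f g : ℝ → ℝ} {L : NNReal} (hf : LipschitzWith L f)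
    {a b : ℝ} (hab : a ≤ b)
    (h : ∀ᵐ x ∂(volume : Measure ℝ), x ∈ Set.Ioo a b → HasDerivAt f (g x) x ∧ 0 ≤ g x) :
    f a ≤ f b := by
  rcases eq_or_lt_of_le hab with rfl | hab
  · exact le_rfl
  set c : ℕ → ℝ := fun n => ((n : ℝ) + 1)⁻¹ with hc
  have hcpos : ∀ n, 0 < c n := fun n => by positivity
  have hfc : Continuous f := hf.continuous
  have hInt : ∀ u v : ℝ, IntervalIntegrable f volume u v := fun u v =>
    hfc.intervalIntegrable u v
  set I : ℝ → ℝ := fun x => ∫ t in a..x, f t with hI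
  have hIsub : ∀ u v : ℝ, ∫ t in u..v, f t = I v - I u := by
    intro u v
    rw [hI]
    simp only
    rw [← intervalIntegral.integral_add_adjacent_intervals (hInt a u) (hInt u v)]
    ring
  set q : ℕ → ℝ → ℝ := fun n x => (f (x + c n) - f x) / c n with hq
  -- Step A
  have hderivI : ∀ x : ℝ, HasDerivAt I (f x) x := by
    intro x
    exact intervalIntegral.integral_hasDerivAt_right (hInt a x)
      hfc.aestronglyMeasurable.stronglyMeasurableAtFilter hfc.continuousAt
  have hslope : ∀ x : ℝ, Tendsto (fun n => (I (x + c n) - I x) / c n) atTop (𝓝 (f x)) := by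
    intro x
    have h1 := (hasDerivAt_iff_tendsto_slope.1 (hderivI x))
    have h2 : Tendsto (fun n => x + c n) atTop (𝓝[≠] x) := by
      apply tendsto_nhdsWithin_of_tendsto_nhds_of_eventually_within
      · have : Tendsto c atTop (𝓝 0) := tendsto_one_div_add_atTop_nhds_zero_nat.congr (by
          intro n; rw [hc]; simp [one_div])
        simpa using tendsto_const_nhds.add this
      · filter_upwards with n
        simp only [mem_compl_iff, mem_singleton_iff]
        intro hx
        have := hcpos n
        nlinarith [hx]
    have := h1.comp h2
    apply this.congr
    intro n
    simp [slope_def_field, div_eq_inv_mul]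
  have hIq : ∀ n, ∫ x in a..b, q n x
      = (I (b + c n) - I b) / c n - (I (a + c n) - I a) / c n := by
    intro n
    have h1 : ∫ x in a..b, q n x
        = (∫ x in a..b, (f (x + c n) - f x)) / c n := by
      rw [← intervalIntegral.integral_div]
    have hcn : Continuous fun x : ℝ => f (x + c n) := hfc.comp (continuous_add_right _)
    rw [h1, intervalIntegral.integral_sub (hcn.intervalIntegrable a b) (hInt a b)]
    rw [intervalIntegral.integral_comp_add_right f (c n), hIsub, hIsub]
    field_simp
    ring
  have hA : Tendsto (fun n => ∫ x in a..b, q n x) atTop (𝓝 (f b - f a)) := by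
    have := (hslope b).sub (hslope a)
    apply this.congr
    intro n
    rw [hIq n]
  -- rewrite as set integrals over Ioo
  have hset : ∀ n, ∫ x in a..b, q n x = ∫ x in Ioo a b, q n x := by
    intro n
    rw [intervalIntegral.integral_of_le hab.le, MeasureTheory.integral_Ioc_eq_integral_Ioo]
  have hae : ∀ᵐ x ∂(volume.restrict (Ioo a b)), HasDerivAt f (g x) x ∧ 0 ≤ g x := by
    exact (ae_restrict_iff' measurableSet_Ioo).2 h
  have hB : Tendsto (fun n => ∫ x in Ioo a b, q n x) atTop (𝓝 (∫ x in Ioo a b, g x)) := by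
    apply MeasureTheory.tendsto_integral_of_dominated_convergence (fun _ => (L : ℝ))
    · intro n
      have hcn : Continuous fun x : ℝ => f (x + c n) := hfc.comp (continuous_add_right _)
      exact ((hcn.sub hfc).div_const (c n)).aestronglyMeasurable
    · exact MeasureTheory.integrable_const _
    · intro n
      filter_upwards with x
      have hd : |f (x + c n) - f x| ≤ L * c n := by
        have := hf.dist_le_mul (x + c n) x
        rw [Real.dist_eq, Real.dist_eq] at this
        simpa [abs_of_pos (hcpos n)] using this
      rw [hq]
      simp only [norm_div, Real.norm_eq_abs]
      rw [abs_of_pos (hcpos n), div_le_iff₀ (hcpos n)]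
      exact hd
    · filter_upwards [hae] with x hx
      have h1 := (hasDerivAt_iff_tendsto_slope.1 hx.1)
      have h2 : Tendsto (fun n => x + c n) atTop (𝓝[≠] x) := by
        apply tendsto_nhdsWithin_of_tendsto_nhds_of_eventually_within
        · have : Tendsto c atTop (𝓝 0) := tendsto_one_div_add_atTop_nhds_zero_nat.congr (by
            intro n; rw [hc]; simp [one_div])
          simpa using tendsto_const_nhds.add this
        · filter_upwards with n
          simp only [mem_compl_iff, mem_singleton_iff]
          intro hx'
          have := hcpos n
          nlinarith [hx']
      have := h1.comp h2
      apply this.congr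
      intro n
      simp only [comp_apply, slope_def_field, hq, add_sub_cancel_left]
  have heq : ∫ x in Ioo a b, g x = f b - f a := by
    apply tendsto_nhds_unique hB
    apply hA.congr hset
  have hnn : 0 ≤ ∫ x in Ioo a b, g x := by
    apply MeasureTheory.integral_nonneg_of_ae
    filter_upwards [hae] with x hx using hx.2
  linarith [heq ▸ hnn]

lemma F_exists (E μ : ℝ) (hμ0 : 0 ≤ μ) (hμE : E ≤ μ) (m : ℝ) (hm : μ < m) :
    ∃ F : ℝ → ℝ, (∀ x, μ < x → HasDerivAt F ((x * (x - E))⁻¹) x) ∧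
      StrictMonoOn F (Set.Ioi μ) := by
  set k : ℝ → ℝ := fun t => (t * (t - E))⁻¹ with hk
  have hkc : ContinuousOn k (Set.Ioi μ) := by
    apply ContinuousOn.inv₀
    · fun_prop
    · intro t ht
      have h1 : 0 < t := lt_of_le_of_lt hμ0 ht
      have h2 : 0 < t - E := by have := lt_of_le_of_lt hμE ht; linarith
      positivity
  refine ⟨fun x => ∫ t in m..x, k t, fun x hx => ?_, ?_⟩
  · have huIcc : Set.uIcc m x ⊆ Set.Ioi μ := fun t ht =>
      lt_of_lt_of_le (lt_min hm hx) ht.1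
    apply intervalIntegral.integral_hasDerivAt_right
    · exact (hkc.mono huIcc).intervalIntegrable
    · exact ((measurable_id.mul (measurable_id.sub measurable_const)).inv.stronglyMeasurable).stronglyMeasurableAtFilter
    · exact hkc.continuousAt (Ioi_mem_nhds hx)
  · have hF : ∀ x ∈ Set.Ioi μ, HasDerivAt (fun x => ∫ t in m..x, k t) (k x) x := by
      intro x hx
      have huIcc : Set.uIcc m x ⊆ Set.Ioi μ := fun t ht =>
        lt_of_lt_of_le (lt_min hm hx) ht.1
      apply intervalIntegral.integral_hasDerivAt_right
      · exact (hkc.mono huIcc).intervalIntegrable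
      · exact ((measurable_id.mul (measurable_id.sub measurable_const)).inv.stronglyMeasurable).stronglyMeasurableAtFilter
      · exact hkc.continuousAt (Ioi_mem_nhds hx)
    apply strictMonoOn_of_deriv_pos (convex_Ioi μ)
    · exact fun x hx => (hF x hx).continuousAt.continuousWithinAt
    · intro x hx
      rw [interior_Ioi] at hx
      rw [(hF x hx).deriv]
      have h1 : 0 < x := lt_of_le_of_lt hμ0 hx
      have h2 : 0 < x - E := by have := lt_of_le_of_lt hμE hx; linarith
      positivity

lemma no_pos (φm φp E : ℝ) (ρ φ1 d1 φ2 d2 : ℝ → ℝ)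
    (h1F : memF φm φp E φ1 d1) (h1EL : solvesEL E ρ φ1 d1)
    (h2F : memF φm φp E φ2 d2) (h2EL : solvesEL E ρ φ2 d2)
    (u0 : ℝ) (hu0 : u0 ∈ Set.Icc (-1:ℝ) 1) (hpos : φ2 u0 < φ1 u0) : False := by
  obtain ⟨h1d, ⟨L1, h1L⟩, h1m, h1p, h1b⟩ := h1F
  obtain ⟨h2d, ⟨L2, h2L⟩, h2m, h2p, h2b⟩ := h2F
  set I : Set ℝ := Set.Icc (-1:ℝ) 1 with hIdef
  set ψ : ℝ → ℝ := fun u => φ1 u - φ2 u with hψdef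
  have hψc : ContinuousOn ψ I :=
    (fun u hu => ((h1d u hu).continuousWithinAt.sub (h2d u hu).continuousWithinAt))
  have hψm : ψ (-1) = 0 := by simp [hψdef, h1m, h2m]
  have hψp : ψ 1 = 0 := by simp [hψdef, h1p, h2p]
  have hψ0 : 0 < ψ u0 := by simp [hψdef]; linarith
  set μ : ℝ := max 0 E with hμdef
  have hμ0 : 0 ≤ μ := le_max_left _ _
  have hμE : E ≤ μ := le_max_right _ _
  -- bounds on d1, d2
  have hIcp : IsCompact I := isCompact_Icc
  have hIne : I.Nonempty := ⟨0, by constructor <;> norm_num⟩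
  have hd1c : ContinuousOn d1 I := h1L.continuousOn
  have hd2c : ContinuousOn d2 I := h2L.continuousOn
  obtain ⟨u1, hu1I, hu1min⟩ := hIcp.exists_isMinOn hIne hd1c
  obtain ⟨u2, hu2I, hu2min⟩ := hIcp.exists_isMinOn hIne hd2c
  obtain ⟨v1, hv1I, hv1max⟩ := hIcp.exists_isMaxOn hIne hd1c
  obtain ⟨v2, hv2I, hv2max⟩ := hIcp.exists_isMaxOn hIne hd2c
  set m : ℝ := min (d1 u1) (d2 u2) with hmdef
  set M : ℝ := max (d1 v1) (d2 v2) with hMdef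
  have hμm : μ < m := lt_min (h1b u1 hu1I) (h2b u2 hu2I)
  have hd1mem : ∀ u ∈ I, d1 u ∈ Set.Icc m M := fun u hu =>
    ⟨le_trans (min_le_left _ _) (hu1min hu), le_trans (hv1max hu) (le_max_left _ _)⟩
  have hd2mem : ∀ u ∈ I, d2 u ∈ Set.Icc m M := fun u hu =>
    ⟨le_trans (min_le_right _ _) (hu2min hu), le_trans (hv2max hu) (le_max_right _ _)⟩
  have hmM : m ≤ M := le_trans (hd1mem u1 hu1I).1 (hd1mem u1 hu1I).2
  have hIccIoi : Set.Icc m M ⊆ Set.Ioi μ := fun x hx => lt_of_lt_of_le hμm hx.1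
  -- the function F
  obtain ⟨F, hF, hFmono⟩ := F_exists E μ hμ0 hμE m hμm
  -- F is Lipschitz on Icc m M
  have hmpos : 0 < m := lt_of_le_of_lt hμ0 hμm
  have hmEpos : 0 < m - E := by have := lt_of_le_of_lt hμE hμm; linarith
  set C : ℝ := (m * (m - E))⁻¹ with hCdef
  have hCpos : 0 < C := by positivity
  have hFlip : LipschitzOnWith C.toNNReal F (Set.Icc m M) := by
    refine Convex.lipschitzOnWith_of_nnnorm_hasDerivWithin_le (f' := fun x => (x * (x - E))⁻¹)
      (convex_Icc m M) (fun x hx => (hF x (hIccIoi hx)).hasDerivWithinAt) (fun x hx => ?_)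
    rw [← NNReal.coe_le_coe, coe_nnnorm, Real.coe_toNNReal _ hCpos.le, Real.norm_eq_abs]
    have hx1 : 0 < x := lt_of_lt_of_le hmpos hx.1
    have hx2 : 0 < x - E := by have := hx.1; nlinarith
    rw [abs_of_pos (by positivity)]
    apply inv_anti₀ (by positivity)
    nlinarith [hx.1]
  -- Lipschitz extensions
  have hlip1 : LipschitzOnWith (C.toNNReal * L1) (F ∘ d1) I :=
    hFlip.comp h1L (fun u hu => hd1mem u hu)
  have hlip2 : LipschitzOnWith (C.toNNReal * L2) (F ∘ d2) I :=
    hFlip.comp h2L (fun u hu => hd2mem u hu)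
  obtain ⟨g1, hg1lip, hg1eq⟩ := hlip1.extend_real
  obtain ⟨g2, hg2lip, hg2eq⟩ := hlip2.extend_real
  set G : ℝ → ℝ := fun u => g1 u - g2 u with hGdef
  have hGlip : LipschitzWith (C.toNNReal * L1 + C.toNNReal * L2) G := hg1lip.sub hg2lip
  -- a and b
  have hu0I : u0 ∈ I := hu0
  set S1 : Set ℝ := {u ∈ Set.Icc (-1:ℝ) u0 | ψ u = 0} with hS1def
  set S2 : Set ℝ := {u ∈ Set.Icc u0 (1:ℝ) | ψ u = 0} with hS2def
  have hsub1 : Set.Icc (-1:ℝ) u0 ⊆ I := Set.Icc_subset_Icc le_rfl hu0.2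
  have hsub2 : Set.Icc u0 (1:ℝ) ⊆ I := Set.Icc_subset_Icc hu0.1 le_rfl
  have hS1c : IsClosed S1 := by
    have : S1 = Set.Icc (-1:ℝ) u0 ∩ ψ ⁻¹' {0} := by ext x; exact Iff.rfl
    rw [this]
    exact (hψc.mono hsub1).preimage_isClosed_of_isClosed isClosed_Icc isClosed_singleton
  have hS2c : IsClosed S2 := by
    have : S2 = Set.Icc u0 (1:ℝ) ∩ ψ ⁻¹' {0} := by ext x; exact Iff.rfl
    rw [this]
    exact (hψc.mono hsub2).preimage_isClosed_of_isClosed isClosed_Icc isClosed_singleton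
  have hS1ne : S1.Nonempty := ⟨-1, ⟨le_rfl, hu0.1⟩, hψm⟩
  have hS2ne : S2.Nonempty := ⟨1, ⟨hu0.2, le_rfl⟩, hψp⟩
  set a : ℝ := sSup S1 with hadef
  set b : ℝ := sInf S2 with hbdef
  have haS1 : a ∈ S1 := hS1c.csSup_mem hS1ne ((bddAbove_Icc).mono (fun x hx => hx.1))
  have hbS2 : b ∈ S2 := hS2c.csInf_mem hS2ne ((bddBelow_Icc).mono (fun x hx => hx.1))
  have hψa : ψ a = 0 := haS1.2
  have hψb : ψ b = 0 := hbS2.2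
  have hau0 : a < u0 := lt_of_le_of_ne haS1.1.2 (fun h => by rw [h] at hψa; linarith)
  have hu0b : u0 < b := lt_of_le_of_ne (hbS2.1.1) (fun h => by rw [← h] at hψb; linarith)
  have haI : a ∈ I := hsub1 haS1.1
  have hbI : b ∈ I := hsub2 hbS2.1
  -- ψ > 0 on Ioo a b
  have hψpos : ∀ x ∈ Set.Ioo a b, 0 < ψ x := by
    intro x hx
    by_contra hle
    push_neg at hle
    rcases le_total x u0 with hxu | hux
    · have hIcc : Set.Icc x u0 ⊆ I := Set.Icc_subset_Icc (le_trans haI.1 hx.1.le) hu0.2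
      have := intermediate_value_Icc hxu (hψc.mono hIcc)
      obtain ⟨y, hy, hψy⟩ := this ⟨hle, hψ0.le⟩
      have hyS1 : y ∈ S1 := ⟨⟨le_trans haI.1 (le_trans hx.1.le hy.1), hy.2⟩, hψy⟩
      have : y ≤ a := le_csSup ((bddAbove_Icc).mono (fun z hz => hz.1)) hyS1
      linarith [hx.1, hy.1]
    · have hIcc : Set.Icc u0 x ⊆ I := Set.Icc_subset_Icc hu0.1 (le_trans hx.2.le hbI.2)
      have := intermediate_value_Icc' hux (hψc.mono hIcc)
      obtain ⟨y, hy, hψy⟩ := this ⟨hle, hψ0.le⟩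
      have hyS2 : y ∈ S2 := ⟨⟨hy.1, le_trans hy.2 (le_trans hx.2.le hbI.2)⟩, hψy⟩
      have : b ≤ y := csInf_le ((bddBelow_Icc).mono (fun z hz => hz.1)) hyS2
      linarith [hx.2, hy.2]
  -- derivative of ψ at interior points
  have hIoosub : Set.Ioo a b ⊆ Set.Ioo (-1:ℝ) 1 := fun x hx =>
    ⟨lt_of_le_of_lt haI.1 hx.1, lt_of_lt_of_le hx.2 hbI.2⟩
  have hψderiv : ∀ x ∈ Set.Ioo (-1:ℝ) 1, HasDerivAt ψ (d1 x - d2 x) x := by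
    intro x hx
    have hnb : I ∈ 𝓝 x := mem_nhds_iff.2 ⟨Set.Ioo (-1:ℝ) 1, Set.Ioo_subset_Icc_self,
      isOpen_Ioo, hx⟩
    exact ((h1d x (Set.Ioo_subset_Icc_self hx)).hasDerivAt hnb).sub
      ((h2d x (Set.Ioo_subset_Icc_self hx)).hasDerivAt hnb)
  -- MVT on [a, u0] and [u0, b]
  obtain ⟨p, hp, hpq⟩ := exists_hasDerivAt_eq_slope ψ (fun x => d1 x - d2 x) hau0
    (hψc.mono (Set.Icc_subset_Icc haI.1 hu0.2))
    (fun x hx => hψderiv x (hIoosub ⟨hx.1, lt_trans hx.2 hu0b⟩))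
  obtain ⟨q, hq, hqq⟩ := exists_hasDerivAt_eq_slope ψ (fun x => d1 x - d2 x) hu0b
    (hψc.mono (Set.Icc_subset_Icc hu0.1 hbI.2))
    (fun x hx => hψderiv x (hIoosub ⟨lt_trans hau0 hx.1, hx.2⟩))
  have hpd : 0 < d1 p - d2 p := by
    rw [hpq, hψa]
    apply div_pos <;> linarith
  have hqd : d1 q - d2 q < 0 := by
    rw [hqq, hψb]
    apply div_neg_of_neg_of_pos <;> linarith
  have hpI : p ∈ I := Set.Ioo_subset_Icc_self (hIoosub ⟨hp.1, lt_trans hp.2 hu0b⟩)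
  have hqI : q ∈ I := Set.Ioo_subset_Icc_self (hIoosub ⟨lt_trans hau0 hq.1, hq.2⟩)
  -- G p > 0 > G q
  have hGp : 0 < G p := by
    have h1 : G p = F (d1 p) - F (d2 p) := by
      rw [hGdef]; simp only
      rw [← hg1eq hpI, ← hg2eq hpI]; rfl
    rw [h1, sub_pos]
    exact hFmono (hIccIoi (hd2mem p hpI)) (hIccIoi (hd1mem p hpI)) (by linarith)
  have hGq : G q < 0 := by
    have h1 : G q = F (d1 q) - F (d2 q) := by
      rw [hGdef]; simp only
      rw [← hg1eq hqI, ← hg2eq hqI]; rfl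
    rw [h1, sub_neg]
    exact hFmono (hIccIoi (hd1mem q hqI)) (hIccIoi (hd2mem q hqI)) (by linarith)
  -- key_mono on [p, q]
  set r : ℝ → ℝ := fun x => 1 / (1 + Real.exp (φ2 x)) - 1 / (1 + Real.exp (φ1 x)) with hrdef
  have hpq' : p < q := lt_trans hp.2 hq.1
  have hsubpq : Set.Ioo p q ⊆ Set.Ioo a b := Set.Ioo_subset_Ioo hp.1.le hq.2.le
  have hkey : G p ≤ G q := by
    apply key_mono hGlip hpq'.le (g := r)
    filter_upwards [h1EL, h2EL] with x hx1 hx2 hxpq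
    have hxab : x ∈ Set.Ioo a b := hsubpq hxpq
    have hxIoo : x ∈ Set.Ioo (-1:ℝ) 1 := hIoosub hxab
    have hxI : x ∈ I := Set.Ioo_subset_Icc_self hxIoo
    obtain ⟨e1, hde1, heq1⟩ := hx1 hxIoo
    obtain ⟨e2, hde2, heq2⟩ := hx2 hxIoo
    constructor
    · -- HasDerivAt G (r x) x
      have hD1 : HasDerivAt (F ∘ d1) ((d1 x * (d1 x - E))⁻¹ * e1) x :=
        (hF (d1 x) (hIccIoi (hd1mem x hxI))).comp x hde1
      have hD2 : HasDerivAt (F ∘ d2) ((d2 x * (d2 x - E))⁻¹ * e2) x :=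
        (hF (d2 x) (hIccIoi (hd2mem x hxI))).comp x hde2
      have hval : (d1 x * (d1 x - E))⁻¹ * e1 - (d2 x * (d2 x - E))⁻¹ * e2 = r x := by
        have he1 : e1 / (d1 x * (d1 x - E)) = (d1 x * (d1 x - E))⁻¹ * e1 := by
          rw [div_eq_inv_mul]
        have he2 : e2 / (d2 x * (d2 x - E)) = (d2 x * (d2 x - E))⁻¹ * e2 := by
          rw [div_eq_inv_mul]
        rw [hrdef]
        simp only
        linarith [heq1, heq2, he1 ▸ heq1, he2 ▸ heq2]
      have hev : G =ᶠ[𝓝 x] fun u => (F ∘ d1) u - (F ∘ d2) u := by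
        have hnb : I ∈ 𝓝 x := mem_nhds_iff.2 ⟨Set.Ioo (-1:ℝ) 1, Set.Ioo_subset_Icc_self,
          isOpen_Ioo, hxIoo⟩
        filter_upwards [hnb] with y hy
        rw [hGdef]
        simp only
        rw [← hg1eq hy, ← hg2eq hy]
      rw [← hval]
      exact ((hD1.sub hD2).congr_of_eventuallyEq hev)
    · -- 0 ≤ r x
      have hψx : 0 < ψ x := hψpos x hxab
      have hφ : φ2 x ≤ φ1 x := by simp [hψdef] at hψx; linarith
      rw [hrdef]
      simp only [sub_nonneg]
      apply one_div_le_one_div_of_le (by positivity)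
      have := Real.exp_le_exp.2 hφ
      linarith
  linarith

/-- For `E < E₀` the solution in `𝓕_E` of the Euler–Lagrange equation is unique. -/
theorem stmt5 (ρm ρp φm φp E0 : ℝ)
    (h0 : 0 < ρm) (h1 : ρm < ρp) (h2 : ρp < 1)
    (hφm : φm = Real.log (ρm / (1 - ρm))) (hφp : φp = Real.log (ρp / (1 - ρp)))
    (hE0 : E0 = (φp - φm) / 2) (E : ℝ) (hE : E < E0)
    (ρ : ℝ → ℝ) (hρ : memM ρ)
    (φ1 d1 φ2 d2 : ℝ → ℝ)
    (h1F : memF φm φp E φ1 d1) (h1EL : solvesEL E ρ φ1 d1)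
    (h2F : memF φm φp E φ2 d2) (h2EL : solvesEL E ρ φ2 d2) :
    Set.EqOn φ1 φ2 (Set.Icc (-1:ℝ) 1) := by
  intro u hu
  by_contra hne
  rcases lt_or_gt_of_ne hne with hlt | hgt
  · exact no_pos φm φp E ρ φ2 d2 φ1 d1 h2F h2EL h1F h1EL u hu hlt
  · exact no_pos φm φp E ρ φ1 d1 φ2 d2 h1F h1EL h2F h2EL u hu hgt
end
end

section
/- Let E < E₀ and let ρ : [−1,1] → [0,1] be continuous. Then the unique solution Φ(ρ) ∈ 𝓕_E of the Euler–Lagrange equation is twice continuously differentiable on [−1,1], and the equation φ''/(φ'(φ'−E)) + 1/(1+e^φ) = ρ holds at every point of [−1,1]. -/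
/-! Solving the Euler–Lagrange equation for `φ''` expresses it a.e. through a function that is
continuous as soon as `ρ` is. Since `φ'` is Lipschitz, hence absolutely continuous, it is the
integral of its a.e. derivative, so it is `C¹` with that continuous derivative, and the equation
then holds everywhere. -/

open Real MeasureTheory Set Filter Topology Function

noncomputable section

theorem AbsolutelyContinuousOnInterval.hasDerivWithinAt_of_ae_hasDerivAt {f g : ℝ → ℝ}
    {a b : ℝ} (hab : a ≤ b) (hf : AbsolutelyContinuousOnInterval f a b)
    (hg : ContinuousOn g (Icc a b)) (hfg : ∀ᵐ x, x ∈ Ioo a b → HasDerivAt f (g x) x) :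
    ∀ x ∈ Icc a b, HasDerivWithinAt f (g x) (Icc a b) x := by
  set G := IccExtend hab ((Icc a b).domRestrict g)
  have hG : Continuous G := continuous_IccExtend_iff.2 hg.domRestrict
  have hGg : EqOn G g (Icc a b) := fun x hx => IccExtend_of_mem hab _ hx
  set F := fun x => ∫ t in a..x, G t
  have hF : ∀ x, HasDerivAt F (G x) x := fun x => (hG.integral_hasStrictDerivAt a x).hasDerivAt
  have hF_ac : AbsolutelyContinuousOnInterval F a b :=
    (hG.intervalIntegrable a b).absolutelyContinuousOnInterval_intervalIntegral left_mem_uIcc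
  obtain ⟨C, hC⟩ : ∃ C, ∀ x ∈ uIcc a b, (f - F) x = C := by
    refine (hf.sub hF_ac).const_of_ae_hasDerivAt_zero ?_
    filter_upwards [hfg, (countable_singleton a).ae_notMem volume,
      (countable_singleton b).ae_notMem volume] with x hx hxa hxb hxab
    rw [uIcc_of_le hab] at hxab
    have hx' : x ∈ Ioo a b := ⟨lt_of_le_of_ne hxab.1 (Ne.symm hxa), lt_of_le_of_ne hxab.2 hxb⟩
    simpa [hGg (Ioo_subset_Icc_self hx')] using (hx hx').sub (hF x)
  rw [uIcc_of_le hab] at hC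
  have hfF : EqOn f (fun y => F y + C) (Icc a b) := fun y hy => sub_eq_iff_eq_add'.1 (hC y hy)
  intro x hx
  exact ((hF x).add_const C).hasDerivWithinAt.congr hfF (hfF hx) |>.congr_deriv (hGg hx)

/-- The value of `φ''` forced by the Euler–Lagrange equation. -/
def elSecondDeriv (E : ℝ) (ρ φ d : ℝ → ℝ) (u : ℝ) : ℝ :=
  (ρ u - 1 / (1 + exp (φ u))) * (d u * (d u - E))

section memF

variable {φm φp E : ℝ} {φ d : ℝ → ℝ}

theorem memF.mul_sub_pos (hF : memF φm φp E φ d) {u : ℝ} (hu : u ∈ Icc (-1 : ℝ) 1) :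
    0 < d u * (d u - E) := by
  have h := hF.2.2.2.2 u hu
  exact mul_pos (lt_of_le_of_lt (le_max_left 0 E) h)
    (sub_pos.2 (lt_of_le_of_lt (le_max_right 0 E) h))

theorem memF.continuousOn_elSecondDeriv (hF : memF φm φp E φ d) {ρ : ℝ → ℝ}
    (hρ : ContinuousOn ρ (Icc (-1 : ℝ) 1)) :
    ContinuousOn (elSecondDeriv E ρ φ d) (Icc (-1 : ℝ) 1) := by
  obtain ⟨hφ, ⟨_, hd⟩, -⟩ := hF
  have hφc : ContinuousOn φ (Icc (-1 : ℝ) 1) := fun u hu => (hφ u hu).continuousWithinAt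
  have hdc := hd.continuousOn
  exact (hρ.sub (continuousOn_const.div (continuousOn_const.add hφc.rexp)
    fun u _ => (add_pos one_pos (exp_pos (φ u))).ne')).mul (hdc.mul (hdc.sub continuousOn_const))

theorem memF.ae_hasDerivAt_elSecondDeriv (hF : memF φm φp E φ d) {ρ : ℝ → ℝ}
    (hEL : solvesEL E ρ φ d) :
    ∀ᵐ u, u ∈ Ioo (-1 : ℝ) 1 → HasDerivAt d (elSecondDeriv E ρ φ d u) u := by
  filter_upwards [hEL] with u hu hmem
  obtain ⟨d2, hd2, heq⟩ := hu hmem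
  have hD := (hF.mul_sub_pos (Ioo_subset_Icc_self hmem)).ne'
  convert hd2 using 1
  rw [elSecondDeriv, ← heq, add_sub_cancel_right, div_mul_cancel₀ _ hD]

end memF

theorem stmt6_general (φm φp : ℝ) (E : ℝ)
    (ρ : ℝ → ℝ) (hρc : ContinuousOn ρ (Set.Icc (-1:ℝ) 1))
    (φ d : ℝ → ℝ) (hF : memF φm φp E φ d) (hEL : solvesEL E ρ φ d) :
    ∃ d2 : ℝ → ℝ, ContinuousOn d2 (Set.Icc (-1:ℝ) 1) ∧
      (∀ u ∈ Set.Icc (-1:ℝ) 1, HasDerivWithinAt d (d2 u) (Set.Icc (-1:ℝ) 1) u) ∧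
      (∀ u ∈ Set.Icc (-1:ℝ) 1,
        d2 u / (d u * (d u - E)) + 1 / (1 + Real.exp (φ u)) = ρ u) := by
  obtain ⟨L, hLip⟩ := hF.2.1
  have hd_ac : AbsolutelyContinuousOnInterval d (-1) 1 :=
    (uIcc_of_le (by norm_num : (-1 : ℝ) ≤ 1) ▸ hLip).absolutelyContinuousOnInterval
  have hcont := hF.continuousOn_elSecondDeriv hρc
  refine ⟨elSecondDeriv E ρ φ d, hcont, hd_ac.hasDerivWithinAt_of_ae_hasDerivAt (by norm_num)
    hcont (hF.ae_hasDerivAt_elSecondDeriv hEL), fun u hu => ?_⟩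
  rw [elSecondDeriv, mul_div_cancel_right₀ _ (hF.mul_sub_pos hu).ne', sub_add_cancel]

/-- For continuous `ρ`, the solution `Φ(ρ) ∈ 𝓕_E` of the Euler–Lagrange equation is
`C²` on `[−1,1]` and the equation holds at every point. -/
theorem stmt6 (ρm ρp φm φp E0 : ℝ)
    (h0 : 0 < ρm) (h1 : ρm < ρp) (h2 : ρp < 1)
    (hφm : φm = Real.log (ρm / (1 - ρm))) (hφp : φp = Real.log (ρp / (1 - ρp)))
    (hE0 : E0 = (φp - φm) / 2) (E : ℝ) (hE : E < E0)
    (ρ : ℝ → ℝ) (hρ : memM ρ) (hρc : ContinuousOn ρ (Set.Icc (-1:ℝ) 1))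
    (φ d : ℝ → ℝ) (hF : memF φm φp E φ d) (hEL : solvesEL E ρ φ d) :
    ∃ d2 : ℝ → ℝ, ContinuousOn d2 (Set.Icc (-1:ℝ) 1) ∧
      (∀ u ∈ Set.Icc (-1:ℝ) 1, HasDerivWithinAt d (d2 u) (Set.Icc (-1:ℝ) 1) u) ∧
      (∀ u ∈ Set.Icc (-1:ℝ) 1,
        d2 u / (d u * (d u - E)) + 1 / (1 + Real.exp (φ u)) = ρ u) :=
  stmt6_general φm φp E ρ hρc φ d hF hEL

end
end
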